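/- Let m, c be positive integers, R > 0, ε₁, ε₂ ≥ 0. Let A, A' ∈ ℝ^{m×c} with ‖A' − A‖_∞ ≤ ε₁, let α, α' ∈ ℝ^{m×c} with ‖α' − α‖_∞ ≤ ε₂ and ‖α'‖_∞ ≤ R, let W ∈ ℝ^{c×c} with ‖W‖_∞ ≤ R and b ∈ ℝ^{1×c}, and suppose the matrix M with rows M_{j,*} = A_{j,*}·W + b satisfies ‖M‖_∞ ≤ R. Let M' be the matrix with rows M'_{j,*} = A'_{j,*}·W + b. Then the scaled projection outputs satisfy ‖M' ∘ α' − M ∘ α‖_∞ ≤ c·R²·ε₁ + R·ε₂. -/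

import Mathlib

/-!
Split `M' ∘ α' - M ∘ α = (M' - M) ∘ α' + M ∘ (α' - α)`. The entrywise max norm is submultiplicative
for the Hadamard product, and `M' - M = (A' - A) W` since the bias cancels, so each entry of
`M' - M` is a sum of `c` products bounded by `ε₁ R`. Hence the two terms are at most
`(c R ε₁) R` and `R ε₂`.
-/

open Matrix

/-- The maximum absolute value of the entries of a real matrix (the `ℓ∞` entrywise norm). -/
noncomputable def maxEntry {m n : ℕ} (A : Matrix (Fin m) (Fin n) ℝ) : ℝ :=
  ⨆ i, ⨆ j, |A i j|

/-- The MLP layer with weight `W : ℝ^{c×c}` and bias row vector `b : ℝ^{1×c}`: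
row `j` of the output is `A_{j,*} · W + b`. -/
noncomputable def MLP {m c : ℕ} (A : Matrix (Fin m) (Fin c) ℝ)
    (W : Matrix (Fin c) (Fin c) ℝ) (b : Matrix (Fin 1) (Fin c) ℝ) :
    Matrix (Fin m) (Fin c) ℝ :=
  Matrix.of fun j k => (A * W) j k + b 0 k

section maxEntry

variable {m n p : ℕ}

lemma abs_le_maxEntry (A : Matrix (Fin m) (Fin n) ℝ) (i : Fin m) (j : Fin n) :
    |A i j| ≤ maxEntry A :=
  (le_ciSup (f := fun k => |A i k|) (Set.finite_range _).bddAbove j).trans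
    (le_ciSup (f := fun i => ⨆ k, |A i k|) (Set.finite_range _).bddAbove i)

lemma maxEntry_nonneg (A : Matrix (Fin m) (Fin n) ℝ) : 0 ≤ maxEntry A :=
  Real.iSup_nonneg fun _ => Real.iSup_nonneg fun _ => abs_nonneg _

lemma maxEntry_le {A : Matrix (Fin m) (Fin n) ℝ} {B : ℝ} (hB : 0 ≤ B)
    (h : ∀ i j, |A i j| ≤ B) : maxEntry A ≤ B :=
  Real.iSup_le (fun i => Real.iSup_le (h i) hB) hB

lemma maxEntry_add_le (A B : Matrix (Fin m) (Fin n) ℝ) :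
    maxEntry (A + B) ≤ maxEntry A + maxEntry B :=
  maxEntry_le (add_nonneg (maxEntry_nonneg A) (maxEntry_nonneg B)) fun i j =>
    (abs_add_le _ _).trans (add_le_add (abs_le_maxEntry A i j) (abs_le_maxEntry B i j))

lemma maxEntry_hadamard_le (A B : Matrix (Fin m) (Fin n) ℝ) :
    maxEntry (A ⊙ B) ≤ maxEntry A * maxEntry B :=
  maxEntry_le (mul_nonneg (maxEntry_nonneg A) (maxEntry_nonneg B)) fun i j => by
    rw [hadamard_apply, abs_mul]
    exact mul_le_mul (abs_le_maxEntry A i j) (abs_le_maxEntry B i j) (abs_nonneg _)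
      (maxEntry_nonneg A)

lemma maxEntry_mul_le (A : Matrix (Fin m) (Fin n) ℝ) (B : Matrix (Fin n) (Fin p) ℝ) :
    maxEntry (A * B) ≤ n * maxEntry A * maxEntry B := by
  have hAB := mul_nonneg (maxEntry_nonneg A) (maxEntry_nonneg B)
  refine maxEntry_le (by rw [mul_assoc]; positivity) fun i j => ?_
  calc |(A * B) i j| ≤ ∑ k, |A i k * B k j| := by
        rw [mul_apply]; exact Finset.abs_sum_le_sum_abs _ _
    _ ≤ ∑ _k : Fin n, maxEntry A * maxEntry B := by
        refine Finset.sum_le_sum fun k _ => ?_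
        rw [abs_mul]
        exact mul_le_mul (abs_le_maxEntry A i k) (abs_le_maxEntry B k j) (abs_nonneg _)
          (maxEntry_nonneg A)
    _ = n * maxEntry A * maxEntry B := by simp [mul_assoc]

end maxEntry

lemma MLP_sub_MLP {m c : ℕ} (A A' : Matrix (Fin m) (Fin c) ℝ)
    (W : Matrix (Fin c) (Fin c) ℝ) (b : Matrix (Fin 1) (Fin c) ℝ) :
    MLP A' W b - MLP A W b = (A' - A) * W := by
  rw [Matrix.sub_mul]
  ext j k
  simp [MLP]

lemma hadamard_sub_hadamard {ι κ R : Type*} [CommRing R] (M M' α α' : Matrix ι κ R) :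
    M' ⊙ α' - M ⊙ α = (M' - M) ⊙ α' + M ⊙ (α' - α) := by
  ext i j
  simp only [Matrix.sub_apply, Matrix.add_apply, hadamard_apply]
  ring

theorem scaled_projection_error_bound_general (m c : ℕ)
    (R ε₁ ε₂ : ℝ)
    (A A' α α' : Matrix (Fin m) (Fin c) ℝ)
    (W : Matrix (Fin c) (Fin c) ℝ) (b : Matrix (Fin 1) (Fin c) ℝ)
    (hA : maxEntry (A' - A) ≤ ε₁) (hα : maxEntry (α' - α) ≤ ε₂)
    (hα' : maxEntry α' ≤ R) (hW : maxEntry W ≤ R)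
    (hM : maxEntry (MLP A W b) ≤ R) :
    maxEntry ((MLP A' W b) ⊙ α' - (MLP A W b) ⊙ α) ≤ c * R ^ 2 * ε₁ + R * ε₂ := by
  have hR : 0 ≤ R := (maxEntry_nonneg W).trans hW
  have hε₁ : 0 ≤ ε₁ := (maxEntry_nonneg _).trans hA
  have hMLP : maxEntry (MLP A' W b - MLP A W b) ≤ c * ε₁ * R := by
    rw [MLP_sub_MLP]
    calc maxEntry ((A' - A) * W) ≤ c * maxEntry (A' - A) * maxEntry W := maxEntry_mul_le _ _
      _ ≤ c * ε₁ * R := by gcongr; exact maxEntry_nonneg _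
  rw [hadamard_sub_hadamard]
  calc _ ≤ maxEntry (MLP A' W b - MLP A W b) * maxEntry α'
          + maxEntry (MLP A W b) * maxEntry (α' - α) :=
        (maxEntry_add_le _ _).trans (add_le_add (maxEntry_hadamard_le _ _)
          (maxEntry_hadamard_le _ _))
    _ ≤ c * ε₁ * R * R + R * ε₂ := by
        gcongr
        · exact maxEntry_nonneg _
        · exact maxEntry_nonneg _
    _ = c * R ^ 2 * ε₁ + R * ε₂ := by ring

theorem scaled_projection_error_bound (m c : ℕ) (hm : 0 < m) (hc : 0 < c)
    (R ε₁ ε₂ : ℝ) (hR : 0 < R) (hε₁ : 0 ≤ ε₁) (hε₂ : 0 ≤ ε₂)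
    (A A' α α' : Matrix (Fin m) (Fin c) ℝ)
    (W : Matrix (Fin c) (Fin c) ℝ) (b : Matrix (Fin 1) (Fin c) ℝ)
    (hA : maxEntry (A' - A) ≤ ε₁) (hα : maxEntry (α' - α) ≤ ε₂)
    (hα' : maxEntry α' ≤ R) (hW : maxEntry W ≤ R)
    (hM : maxEntry (MLP A W b) ≤ R) :
    maxEntry ((MLP A' W b) ⊙ α' - (MLP A W b) ⊙ α) ≤ c * R ^ 2 * ε₁ + R * ε₂ :=
  scaled_projection_error_bound_general m c R ε₁ ε₂ A A' α α' W b hA hα hα' hW hM
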